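/- arXiv:1905.00915 — 2 statements merged into one kernel-verified Lean document; each statement's English description precedes it below -/
import Mathlib

section
/- Let f: S^n → S^n be continuous and suppose ∫_{S^n} f(ζ) dμ(ζ) = 0, where μ is the normalized spherical measure. Define F(x,y) = ∫_{S^n} M_{-y}(f(ζ)) · ((1-‖x‖²)/‖ζ-x‖²)^n dμ(ζ). Then the partial derivative of F in y at (0,0) applied to a vector v ∈ ℝ^{n+1} equals -2v + 2∫_{S^n} ⟨v, f(ζ)⟩ f(ζ) dμ(ζ). -/
open MeasureTheory Metric
open scoped RealInnerProductSpace

/-- The Möbius transformation `M_x` of the unit ball sending `0` to `x`. -/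
noncomputable def Mob {E : Type*} [NormedAddCommGroup E] [InnerProductSpace ℝ E]
    (x z : E) : E :=
  (1 + ‖x‖ ^ 2 * ‖z‖ ^ 2 + 2 * ⟪x, z⟫)⁻¹ •
    ((1 - ‖x‖ ^ 2) • z + (1 + ‖z‖ ^ 2 + 2 * ⟪x, z⟫) • x)

/-!
On the sphere the Poisson factor at `x = 0` is `1`, so `F 0 y = ∫ M_{-y}(f ζ) dμ(ζ)`. The map
`(y, z) ↦ M_{-y} z` is smooth wherever its denominator, which is `‖z - y‖²` for `‖z‖ = 1`, does not
vanish, so its `y`-derivative is bounded on the compact set `closedBall 0 (1/2) × S^n` and we may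
differentiate under the integral sign. At `y = 0` that derivative is
`v ↦ -(1 + ‖z‖²) v + 2⟪z, v⟫ z`; integrating it against `z = f ζ` gives the formula.
-/

section Mobius

variable {E : Type*} [NormedAddCommGroup E] [InnerProductSpace ℝ E]

theorem hasFDerivAt_mob_zero_left (z : E) :
    HasFDerivAt (fun x => Mob x z)
      ((1 + ‖z‖ ^ 2) • ContinuousLinearMap.id ℝ E - (2 : ℝ) • (innerSL ℝ z).smulRight z) 0 := by
  have hid := hasFDerivAt_id (𝕜 := ℝ) (0 : E)
  have hinner := hid.inner ℝ (hasFDerivAt_const (𝕜 := ℝ) z (0 : E))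
  have hden : HasFDerivAt (fun x : E => 1 + ‖x‖ ^ 2 * ‖z‖ ^ 2 + 2 * ⟪x, z⟫) _ 0 :=
    ((hid.norm_sq.mul_const (‖z‖ ^ 2)).const_add 1).add (hinner.const_mul 2)
  have hnum : HasFDerivAt
      (fun x : E => (1 - ‖x‖ ^ 2) • z + (1 + ‖z‖ ^ 2 + 2 * ⟪x, z⟫) • x) _ 0 :=
    ((hid.norm_sq.const_sub 1).smul_const z).add
      (((hinner.const_mul 2).const_add (1 + ‖z‖ ^ 2)).smul hid)
  refine (((hasFDerivAt_inv (by simp)).comp 0 hden).smul hnum).congr_fderiv ?_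
  ext v
  simp [real_inner_comm]
  module

theorem fderiv_mob_neg_zero_apply {z : E} (hz : ‖z‖ = 1) (v : E) :
    fderiv ℝ (fun y => Mob (-y) z) 0 v = -(2 : ℝ) • v + (2 : ℝ) • ⟪v, z⟫ • z := by
  have hneg : HasFDerivAt (fun y : E => -y) (-ContinuousLinearMap.id ℝ E) 0 :=
    (hasFDerivAt_id 0).neg
  have h : HasFDerivAt (fun y => Mob (-y) z) _ 0 :=
    (neg_zero (G := E) ▸ hasFDerivAt_mob_zero_left z).comp (0 : E) hneg
  rw [h.fderiv]
  simp [hz, real_inner_comm]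
  module

theorem mob_denom_ne_zero {x z : E} (hz : ‖z‖ = 1) (hx : ‖x‖ < 1) :
    1 + ‖x‖ ^ 2 * ‖z‖ ^ 2 + 2 * ⟪x, z⟫ ≠ 0 := by
  have hpos : 0 < ‖z + x‖ := by
    have := norm_sub_norm_le z (-x)
    rw [norm_neg, sub_neg_eq_add] at this
    linarith
  have hsq : 1 + ‖x‖ ^ 2 * ‖z‖ ^ 2 + 2 * ⟪x, z⟫ = ‖z + x‖ ^ 2 := by
    rw [norm_add_sq_real, hz, real_inner_comm]
    ring
  rw [hsq]
  positivity

theorem contDiffAt_mob {n : WithTop ℕ∞} {p : E × E}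
    (hp : 1 + ‖p.1‖ ^ 2 * ‖p.2‖ ^ 2 + 2 * ⟪p.1, p.2⟫ ≠ 0) :
    ContDiffAt ℝ n (fun q : E × E => Mob q.1 q.2) p := by
  have hinner : ContDiffAt ℝ n (fun q : E × E => ⟪q.1, q.2⟫) p :=
    contDiffAt_fst.inner ℝ contDiffAt_snd
  have hnorm₁ : ContDiffAt ℝ n (fun q : E × E => ‖q.1‖ ^ 2) p := contDiffAt_fst.norm_sq ℝ
  have hnorm₂ : ContDiffAt ℝ n (fun q : E × E => ‖q.2‖ ^ 2) p := contDiffAt_snd.norm_sq ℝ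
  unfold Mob
  fun_prop (disch := exact hp)

theorem contDiffAt_mob_neg {n : WithTop ℕ∞} {y z : E} (hz : ‖z‖ = 1) (hy : ‖y‖ < 1) :
    ContDiffAt ℝ n (fun p : E × E => Mob (-p.1) p.2) (y, z) := by
  have hmob : ContDiffAt ℝ n (fun q : E × E => Mob q.1 q.2) (-y, z) :=
    contDiffAt_mob (mob_denom_ne_zero hz (by rwa [norm_neg]))
  have hneg : ContDiffAt ℝ n (fun p : E × E => (-p.1, p.2)) (y, z) :=
    contDiffAt_fst.neg.prodMk contDiffAt_snd
  exact hmob.comp (g := fun q : E × E => Mob q.1 q.2) (y, z) hneg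

theorem continuousOn_mob_neg {y : E} (hy : ‖y‖ < 1) :
    ContinuousOn (fun z => Mob (-y) z) (sphere (0 : E) 1) := fun _ hz =>
  have h := (contDiffAt_mob_neg (n := 0) (mem_sphere_zero_iff_norm.mp hz) hy).continuousAt
  (h.comp (Continuous.prodMk_right y).continuousAt).continuousWithinAt

theorem differentiableAt_mob_neg {y z : E} (hz : ‖z‖ = 1) (hy : ‖y‖ < 1) :
    DifferentiableAt ℝ (fun y => Mob (-y) z) y := by
  have h := (contDiffAt_mob_neg (n := 1) hz hy).differentiableAt one_ne_zero
  have hpair : DifferentiableAt ℝ (fun y' : E => (y', z)) y :=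
    differentiableAt_id.prodMk (differentiableAt_const z)
  exact h.comp y hpair

theorem continuousAt_fderiv_mob_neg {y z : E} (hz : ‖z‖ = 1) (hy : ‖y‖ < 1) :
    ContinuousAt (fun p : E × E => fderiv ℝ (fun y => Mob (-y) p.2) p.1) (y, z) := by
  have hswap : ContDiffAt ℝ 1 (fun r : (E × E) × E => (r.2, r.1.2)) ((y, z), y) :=
    contDiffAt_snd.prodMk contDiffAt_fst.snd
  have hmob := contDiffAt_mob_neg (n := 1) hz hy
  have h : ContDiffAt ℝ 1 (fun r : (E × E) × E => Mob (-r.2) r.1.2) ((y, z), y) := by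
    simpa only [Function.comp_def] using hmob.comp ((y, z), y) hswap
  have hfd := ContDiffAt.fderiv (f := fun p y => Mob (-y) p.2) (g := Prod.fst) (m := 0) h
    contDiffAt_fst (by simp)
  exact hfd.continuousAt

theorem continuousOn_fderiv_mob_neg {y : E} (hy : ‖y‖ < 1) :
    ContinuousOn (fun z => fderiv ℝ (fun y => Mob (-y) z) y) (sphere (0 : E) 1) := fun _ hz =>
  have h := continuousAt_fderiv_mob_neg (mem_sphere_zero_iff_norm.mp hz) hy
  (h.comp (Continuous.prodMk_right y).continuousAt).continuousWithinAt

theorem exists_norm_fderiv_mob_neg_le [FiniteDimensional ℝ E] {r : ℝ} (hr : r < 1) :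
    ∃ C, ∀ y ∈ closedBall (0 : E) r, ∀ z ∈ sphere (0 : E) 1,
      ‖fderiv ℝ (fun y => Mob (-y) z) y‖ ≤ C := by
  have hcont : ContinuousOn (fun p : E × E => fderiv ℝ (fun y => Mob (-y) p.2) p.1)
      (closedBall 0 r ×ˢ sphere 0 1) := fun p hp =>
    (continuousAt_fderiv_mob_neg (mem_sphere_zero_iff_norm.mp hp.2)
      ((mem_closedBall_zero_iff.mp hp.1).trans_lt hr)).continuousWithinAt
  obtain ⟨C, hC⟩ := ((isCompact_closedBall (0 : E) r).prod (isCompact_sphere 0 1))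
    |>.exists_bound_of_continuousOn hcont
  exact ⟨C, fun y hy z hz => hC (y, z) ⟨hy, hz⟩⟩

end Mobius

theorem ContinuousOn.integrable_of_isCompact_of_ae_mem {X G : Type*} [TopologicalSpace X]
    [T2Space X] [MeasurableSpace X] [OpensMeasurableSpace X] [NormedAddCommGroup G]
    {μ : Measure X} [IsFiniteMeasure μ] {K : Set X} {g : X → G} (hg : ContinuousOn g K)
    (hK : IsCompact K) (hμK : ∀ᵐ x ∂μ, x ∈ K) : Integrable g μ := by
  rw [← Measure.restrict_eq_self_of_ae_mem hμK]
  exact hg.integrableOn_compact hK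

theorem hasFDerivAt_integral_mob_neg {E : Type*} [NormedAddCommGroup E] [InnerProductSpace ℝ E]
    [FiniteDimensional ℝ E] [MeasurableSpace E] [BorelSpace E] {μ : Measure E} [IsFiniteMeasure μ]
    (hμ : ∀ᵐ ζ ∂μ, ζ ∈ sphere (0 : E) 1) {f : E → E} (hf : ContinuousOn f (sphere 0 1))
    (hfs : Set.MapsTo f (sphere 0 1) (sphere 0 1)) :
    HasFDerivAt (fun y => ∫ ζ, Mob (-y) (f ζ) ∂μ)
      (∫ ζ, fderiv ℝ (fun y => Mob (-y) (f ζ)) 0 ∂μ) 0 := by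
  obtain ⟨C, hC⟩ := exists_norm_fderiv_mob_neg_le (E := E) (r := 1 / 2) (by norm_num)
  have hint {y : E} (hy : ‖y‖ < 1) : Integrable (fun ζ => Mob (-y) (f ζ)) μ :=
    ((continuousOn_mob_neg hy).comp hf hfs).integrable_of_isCompact_of_ae_mem
      (isCompact_sphere 0 1) hμ
  refine hasFDerivAt_integral_of_dominated_of_fderiv_le (F := fun y ζ => Mob (-y) (f ζ))
    (F' := fun y ζ => fderiv ℝ (fun y => Mob (-y) (f ζ)) y) (bound := fun _ => C)
    (ball_mem_nhds (0 : E) (by norm_num : (0 : ℝ) < 1 / 2)) ?_ (hint (y := 0) (by simp)) ?_ ?_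
    (integrable_const C) ?_
  · filter_upwards [ball_mem_nhds (0 : E) one_pos] with y hy
    exact (hint (mem_ball_zero_iff.mp hy)).aestronglyMeasurable
  · have hcont := (continuousOn_fderiv_mob_neg (y := (0 : E)) (by simp)).comp hf hfs
    exact (hcont.integrable_of_isCompact_of_ae_mem (isCompact_sphere 0 1) hμ).aestronglyMeasurable
  · filter_upwards [hμ] with ζ hζ y hy
    exact hC y (ball_subset_closedBall hy) _ (hfs hζ)
  · filter_upwards [hμ] with ζ hζ y hy
    have hy1 : ‖y‖ < 1 := (mem_ball_zero_iff.mp hy).trans (by norm_num)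
    exact (differentiableAt_mob_neg (mem_sphere_zero_iff_norm.mp (hfs hζ)) hy1).hasFDerivAt

theorem barycentric_partial_deriv_y_general (n : ℕ)
    (E : Type*) [NormedAddCommGroup E] [InnerProductSpace ℝ E]
    [FiniteDimensional ℝ E] [MeasurableSpace E] [BorelSpace E]
    (μ : Measure E) [IsProbabilityMeasure μ]
    (hsupp : μ (Metric.sphere (0 : E) 1)ᶜ = 0)
    (f : E → E) (hf : ContinuousOn f (Metric.sphere (0 : E) 1))
    (hfs : Set.MapsTo f (Metric.sphere (0 : E) 1) (Metric.sphere (0 : E) 1))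
    (F : E → E → E)
    (hF : ∀ x y, F x y =
      ∫ ζ, (((1 - ‖x‖ ^ 2) / ‖ζ - x‖ ^ 2) ^ n) • Mob (-y) (f ζ) ∂μ) :
    ∃ D : E →L[ℝ] E, HasFDerivAt (fun y => F 0 y) D (0 : E) ∧
      ∀ v : E, D v = -(2 : ℝ) • v + (2 : ℝ) • ∫ ζ, ⟪v, f ζ⟫ • f ζ ∂μ := by
  have hμ : ∀ᵐ ζ ∂μ, ζ ∈ sphere (0 : E) 1 := mem_ae_iff.mpr hsupp
  have hF0 : (fun y => F 0 y) = fun y => ∫ ζ, Mob (-y) (f ζ) ∂μ := by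
    funext y
    rw [hF]
    refine integral_congr_ae (hμ.mono fun ζ hζ => ?_)
    simp [mem_sphere_zero_iff_norm.mp hζ]
  refine ⟨_, hF0 ▸ hasFDerivAt_integral_mob_neg hμ hf hfs, fun v => ?_⟩
  have hD : ∀ᵐ ζ ∂μ, fderiv ℝ (fun y => Mob (-y) (f ζ)) 0 v
      = -(2 : ℝ) • v + (2 : ℝ) • ⟪v, f ζ⟫ • f ζ :=
    hμ.mono fun ζ hζ => fderiv_mob_neg_zero_apply (mem_sphere_zero_iff_norm.mp (hfs hζ)) v
  have hD_int : Integrable (fun ζ => fderiv ℝ (fun y => Mob (-y) (f ζ)) 0) μ :=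
    ((continuousOn_fderiv_mob_neg (by simp)).comp hf hfs).integrable_of_isCompact_of_ae_mem
      (isCompact_sphere 0 1) hμ
  have hproj_int : Integrable (fun ζ => (2 : ℝ) • ⟪v, f ζ⟫ • f ζ) μ :=
    (((continuous_const.inner continuous_id).smul continuous_id).const_smul (2 : ℝ)
      |>.continuousOn.comp hf hfs).integrable_of_isCompact_of_ae_mem (isCompact_sphere 0 1) hμ
  rw [ContinuousLinearMap.integral_apply hD_int, integral_congr_ae hD,
    integral_add (integrable_const _) hproj_int]
  simp [integral_smul]

/-- for `f : S^n → S^n` continuous with `∫ f dμ = 0` and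
`F(x,y) = ∫ M_{-y}(f ζ) ((1-‖x‖²)/‖ζ-x‖²)^n dμ(ζ)`, the partial derivative of
`F` in `y` at `(0,0)` applied to `v` is `-2v + 2∫ ⟪v, f ζ⟫ f(ζ) dμ(ζ)`. -/
theorem barycentric_partial_deriv_y (n : ℕ)
    (E : Type*) [NormedAddCommGroup E] [InnerProductSpace ℝ E]
    [FiniteDimensional ℝ E] [MeasurableSpace E] [BorelSpace E]
    (hdim : Module.finrank ℝ E = n + 1)
    (μ : Measure E) [IsProbabilityMeasure μ]
    (hsupp : μ (Metric.sphere (0 : E) 1)ᶜ = 0)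
    (hinv : ∀ R : E ≃ₗᵢ[ℝ] E, Measure.map R μ = μ)
    (f : E → E) (hf : ContinuousOn f (Metric.sphere (0 : E) 1))
    (hfs : Set.MapsTo f (Metric.sphere (0 : E) 1) (Metric.sphere (0 : E) 1))
    (hbal : ∫ ζ, f ζ ∂μ = 0)
    (F : E → E → E)
    (hF : ∀ x y, F x y =
      ∫ ζ, (((1 - ‖x‖ ^ 2) / ‖ζ - x‖ ^ 2) ^ n) • Mob (-y) (f ζ) ∂μ) :
    ∃ D : E →L[ℝ] E, HasFDerivAt (fun y => F 0 y) D (0 : E) ∧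
      ∀ v : E, D v = -(2 : ℝ) • v + (2 : ℝ) • ∫ ζ, ⟪v, f ζ⟫ • f ζ ∂μ :=
  barycentric_partial_deriv_y_general n E μ hsupp f hf hfs F hF
end

section
/- Let f: S^n → S^n be continuous with ∫_{S^n} f(ζ) dμ(ζ) = 0, and define F(x,y) = ∫_{S^n} M_{-y}(f(ζ)) · ((1-‖x‖²)/‖ζ-x‖²)^n dμ(ζ). Then the partial derivative of F in x at (0,0) applied to v ∈ ℝ^{n+1} equals 2n ∫_{S^n} ⟨v,ζ⟩ f(ζ) dμ(ζ); in particular its operator norm is at most 2n. -/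
open MeasureTheory Metric
open scoped RealInnerProductSpace

section NormedGroup

variable {E : Type*} [NormedAddCommGroup E]

noncomputable def poissonRatio (x ζ : E) : ℝ := (1 - ‖x‖ ^ 2) / ‖ζ - x‖ ^ 2

lemma poissonRatio_zero_left {ζ : E} (hζ : ‖ζ‖ = 1) : poissonRatio 0 ζ = 1 := by
  simp [poissonRatio, hζ]

lemma continuousAt_poissonRatio {p : E × E} (h : p.1 ≠ p.2) :
    ContinuousAt (fun p : E × E => poissonRatio p.1 p.2) p := by
  have hd : ‖p.2 - p.1‖ ^ 2 ≠ 0 := by simp [sub_eq_zero, h.symm]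
  unfold poissonRatio
  fun_prop (disch := exact hd)

end NormedGroup

section InnerProductSpace

variable {E : Type*} [NormedAddCommGroup E] [InnerProductSpace ℝ E]

lemma Mob_zero_left (z : E) : Mob 0 z = z := by
  simp [Mob]

noncomputable def poissonRatioFDeriv (x ζ : E) : E →L[ℝ] ℝ :=
  (2 / ‖ζ - x‖ ^ 4) • ((1 - ‖x‖ ^ 2) • innerSL ℝ (ζ - x) - ‖ζ - x‖ ^ 2 • innerSL ℝ x)

lemma hasFDerivAt_poissonRatio {x ζ : E} (h : x ≠ ζ) :
    HasFDerivAt (poissonRatio · ζ) (poissonRatioFDeriv x ζ) x := by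
  have hd : ‖ζ - x‖ ^ 2 ≠ 0 := by simp [sub_eq_zero, h.symm]
  have hnum : HasFDerivAt (fun y : E => 1 - ‖y‖ ^ 2) _ x :=
    (hasFDerivAt_id x).norm_sq.const_sub 1
  have hden : HasFDerivAt (fun y : E => (‖ζ - y‖ ^ 2)⁻¹) _ x :=
    (hasDerivAt_inv hd).comp_hasFDerivAt x ((hasFDerivAt_id x).const_sub ζ).norm_sq
  have hquot : HasFDerivAt (fun y : E => (1 - ‖y‖ ^ 2) * (‖ζ - y‖ ^ 2)⁻¹)
      (poissonRatioFDeriv x ζ) x := by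
    refine (hnum.mul hden).congr_fderiv ?_
    ext v
    simp only [poissonRatioFDeriv, add_apply, smul_apply, sub_apply, neg_apply,
      ContinuousLinearMap.comp_apply, ContinuousLinearMap.id_apply, innerSL_apply_apply,
      inner_neg_right, inner_sub_left, id_eq, smul_eq_mul, nsmul_eq_mul]
    field_simp
    ring
  simpa only [poissonRatio, div_eq_mul_inv] using hquot

lemma poissonRatioFDeriv_zero_left {ζ : E} (hζ : ‖ζ‖ = 1) :
    poissonRatioFDeriv 0 ζ = (2 : ℝ) • innerSL ℝ ζ := by
  simp [poissonRatioFDeriv, hζ]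

lemma continuousAt_poissonRatioFDeriv {p : E × E} (h : p.1 ≠ p.2) :
    ContinuousAt (fun p : E × E => poissonRatioFDeriv p.1 p.2) p := by
  have hd : ‖p.2 - p.1‖ ^ 4 ≠ 0 := by simp [sub_eq_zero, h.symm]
  unfold poissonRatioFDeriv
  fun_prop (disch := exact hd)

lemma exists_bound_norm_pow_poissonRatio_smul_fderiv [ProperSpace E] (n : ℕ) {r : ℝ}
    (hr : r < 1) :
    ∃ C, ∀ x ∈ closedBall (0 : E) r, ∀ ζ ∈ sphere (0 : E) 1,
      ‖(n • poissonRatio x ζ ^ (n - 1)) • poissonRatioFDeriv x ζ‖ ≤ C := by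
  have hne : ∀ p ∈ closedBall (0 : E) r ×ˢ sphere (0 : E) 1, p.1 ≠ p.2 := by
    rintro ⟨x, ζ⟩ ⟨hx, hζ⟩ (rfl : x = ζ)
    rw [mem_closedBall_zero_iff] at hx
    rw [mem_sphere_zero_iff_norm] at hζ
    linarith
  obtain ⟨C, hC⟩ :=
    ((isCompact_closedBall 0 r).prod (isCompact_sphere 0 1)).exists_bound_of_continuousOn
      (f := fun p : E × E => (n • poissonRatio p.1 p.2 ^ (n - 1)) • poissonRatioFDeriv p.1 p.2)
      fun p hp => (((continuousAt_poissonRatio (hne p hp)).pow _).const_smul n |>.smul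
        (continuousAt_poissonRatioFDeriv (hne p hp))).continuousWithinAt
  exact ⟨C, fun x hx ζ hζ => hC (x, ζ) ⟨hx, hζ⟩⟩

section Integral

variable {G : Type*} [NormedAddCommGroup G] [NormedSpace ℝ G] [MeasurableSpace E]
  {μ : Measure E} {f : E → G}

lemma integrable_innerSL_smulRight [FiniteDimensional ℝ E] [BorelSpace E]
    (hμ : ∀ᵐ ζ ∂μ, ‖ζ‖ = 1) (hf : Integrable f μ) :
    Integrable (fun ζ => (innerSL ℝ ζ).smulRight (f ζ)) μ := by
  refine hf.norm.mono' ((ContinuousLinearMap.smulRightL ℝ E G).aestronglyMeasurable_comp₂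
    (innerSL ℝ).continuous.aestronglyMeasurable hf.1) ?_
  filter_upwards [hμ] with ζ hζ
  rw [ContinuousLinearMap.norm_smulRight_apply, innerSL_apply_norm, hζ, one_mul]

lemma integral_innerSL_smulRight_apply [FiniteDimensional ℝ E] [BorelSpace E] [CompleteSpace G]
    (hμ : ∀ᵐ ζ ∂μ, ‖ζ‖ = 1) (hf : Integrable f μ) (v : E) :
    (∫ ζ, (innerSL ℝ ζ).smulRight (f ζ) ∂μ) v = ∫ ζ, ⟪v, ζ⟫ • f ζ ∂μ := by
  simp_rw [ContinuousLinearMap.integral_apply (integrable_innerSL_smulRight hμ hf) v,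
    ContinuousLinearMap.smulRight_apply, innerSL_apply_apply, real_inner_comm]

lemma norm_integral_inner_smul_le [IsProbabilityMeasure μ] (hμ : ∀ᵐ ζ ∂μ, ‖ζ‖ = 1)
    (hf : ∀ᵐ ζ ∂μ, ‖f ζ‖ ≤ 1) (v : E) :
    ‖∫ ζ, ⟪v, ζ⟫ • f ζ ∂μ‖ ≤ ‖v‖ := by
  have hpt : ∀ᵐ ζ ∂μ, ‖⟪v, ζ⟫ • f ζ‖ ≤ ‖v‖ := by
    filter_upwards [hμ, hf] with ζ hζ hfζ
    calc ‖⟪v, ζ⟫ • f ζ‖ = |⟪v, ζ⟫| * ‖f ζ‖ := by rw [norm_smul, Real.norm_eq_abs]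
      _ ≤ ‖v‖ * 1 := by
        gcongr
        exact (abs_real_inner_le_norm v ζ).trans_eq (by rw [hζ, mul_one])
      _ = ‖v‖ := mul_one _
  simpa using norm_integral_le_of_norm_le (integrable_const ‖v‖) hpt

lemma hasFDerivAt_integral_pow_poissonRatio_smul [FiniteDimensional ℝ E] [BorelSpace E]
    [CompleteSpace G] (hμ : ∀ᵐ ζ ∂μ, ‖ζ‖ = 1) (n : ℕ) (hf : Integrable f μ) :
    HasFDerivAt (fun x => ∫ ζ, poissonRatio x ζ ^ n • f ζ ∂μ)
      ((2 * n : ℝ) • ∫ ζ, (innerSL ℝ ζ).smulRight (f ζ) ∂μ) 0 := by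
  set F' : E → E → E →L[ℝ] G := fun x ζ =>
    ((n • poissonRatio x ζ ^ (n - 1)) • poissonRatioFDeriv x ζ).smulRight (f ζ)
  have hF'₀ : F' 0 =ᵐ[μ] fun ζ => (2 * n : ℝ) • (innerSL ℝ ζ).smulRight (f ζ) := by
    filter_upwards [hμ] with ζ hζ
    ext v
    simp [F', poissonRatio_zero_left hζ, poissonRatioFDeriv_zero_left hζ, smul_smul,
      mul_comm (n : ℝ) 2]
  obtain ⟨C, hC⟩ := exists_bound_norm_pow_poissonRatio_smul_fderiv (E := E) n
    (by norm_num : (2⁻¹ : ℝ) < 1)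
  have hdom : ∀ᵐ ζ ∂μ, ∀ x ∈ ball (0 : E) 2⁻¹, x ≠ ζ ∧ ‖F' x ζ‖ ≤ C * ‖f ζ‖ := by
    filter_upwards [hμ] with ζ hζ x hx
    have hx' : ‖x‖ < 2⁻¹ := mem_ball_zero_iff.mp hx
    refine ⟨by rintro rfl; linarith, ?_⟩
    rw [ContinuousLinearMap.norm_smulRight_apply]
    exact mul_le_mul_of_nonneg_right (hC x (ball_subset_closedBall hx) ζ
      (mem_sphere_zero_iff_norm.mpr hζ)) (norm_nonneg _)
  have key := hasFDerivAt_integral_of_dominated_of_fderiv_le (F' := F')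
    (ball_mem_nhds (0 : E) (by norm_num : (0 : ℝ) < 2⁻¹))
    (Filter.Eventually.of_forall fun x => ?meas) ?int ?meas'
    (hdom.mono fun ζ h x hx => (h x hx).2) (hf.norm.const_mul C)
    (hdom.mono fun ζ h x hx => ((hasFDerivAt_poissonRatio (h x hx).1).pow n).smul_const (f ζ))
  · rwa [integral_congr_ae hF'₀, integral_smul] at key
  case meas =>
    exact ((by unfold poissonRatio; fun_prop : Measurable (poissonRatio x)).pow_const n
      |>.aestronglyMeasurable).smul hf.1
  case int =>
    refine hf.congr ?_
    filter_upwards [hμ] with ζ hζ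
    simp [poissonRatio_zero_left hζ]
  case meas' =>
    exact ((integrable_innerSL_smulRight hμ hf).1.const_smul (2 * n : ℝ)).congr hF'₀.symm

end Integral

end InnerProductSpace

theorem barycentric_partial_deriv_x_general (n : ℕ)
    (E : Type*) [NormedAddCommGroup E] [InnerProductSpace ℝ E]
    [FiniteDimensional ℝ E] [MeasurableSpace E] [BorelSpace E]
    (μ : Measure E) [IsProbabilityMeasure μ]
    (hsupp : μ (Metric.sphere (0 : E) 1)ᶜ = 0)
    (f : E → E) (hf : ContinuousOn f (Metric.sphere (0 : E) 1))
    (hfs : Set.MapsTo f (Metric.sphere (0 : E) 1) (Metric.sphere (0 : E) 1))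
    (F : E → E → E)
    (hF : ∀ x y, F x y =
      ∫ ζ, (((1 - ‖x‖ ^ 2) / ‖ζ - x‖ ^ 2) ^ n) • Mob (-y) (f ζ) ∂μ) :
    ∃ D : E →L[ℝ] E, HasFDerivAt (fun x => F x 0) D (0 : E) ∧
      (∀ v : E, D v = ((2 * n : ℝ)) • ∫ ζ, ⟪v, ζ⟫ • f ζ ∂μ) ∧
      ‖D‖ ≤ 2 * n := by
  have hsphere : ∀ᵐ ζ ∂μ, ζ ∈ sphere (0 : E) 1 := by
    simpa using measure_eq_zero_iff_ae_notMem.mp hsupp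
  have hμ : ∀ᵐ ζ ∂μ, ‖ζ‖ = 1 := hsphere.mono fun ζ hζ => mem_sphere_zero_iff_norm.mp hζ
  have hf_norm : ∀ᵐ ζ ∂μ, ‖f ζ‖ ≤ 1 :=
    hsphere.mono fun ζ hζ => (mem_sphere_zero_iff_norm.mp (hfs hζ)).le
  have hf_int : Integrable f μ := by
    refine (integrable_const (1 : ℝ)).mono' ?_ hf_norm
    simpa [Measure.restrict_eq_self_of_ae_mem hsphere] using
      hf.aestronglyMeasurable (μ := μ) isClosed_sphere.measurableSet
  have hD := hasFDerivAt_integral_pow_poissonRatio_smul hμ n hf_int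
  have hDv : ∀ v : E, ((2 * n : ℝ) • ∫ ζ, (innerSL ℝ ζ).smulRight (f ζ) ∂μ) v =
      (2 * n : ℝ) • ∫ ζ, ⟪v, ζ⟫ • f ζ ∂μ := fun v => by
    rw [smul_apply, integral_innerSL_smulRight_apply hμ hf_int]
  refine ⟨_, by simpa [hF, Mob_zero_left, poissonRatio] using hD, hDv, ?_⟩
  refine ContinuousLinearMap.opNorm_le_bound _ (by positivity) fun v => ?_
  rw [hDv, norm_smul, Real.norm_eq_abs, abs_of_nonneg (by positivity)]
  exact mul_le_mul_of_nonneg_left (norm_integral_inner_smul_le hμ hf_norm v) (by positivity)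

/-- for `f : S^n → S^n` continuous with `∫ f dμ = 0` and
`F(x,y) = ∫ M_{-y}(f ζ) ((1-‖x‖²)/‖ζ-x‖²)^n dμ(ζ)`, the partial derivative of
`F` in `x` at `(0,0)` applied to `v` is `2n ∫ ⟪v, ζ⟫ f(ζ) dμ(ζ)`; in particular
its operator norm is at most `2n`. -/
theorem barycentric_partial_deriv_x (n : ℕ)
    (E : Type*) [NormedAddCommGroup E] [InnerProductSpace ℝ E]
    [FiniteDimensional ℝ E] [MeasurableSpace E] [BorelSpace E]
    (hdim : Module.finrank ℝ E = n + 1)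
    (μ : Measure E) [IsProbabilityMeasure μ]
    (hsupp : μ (Metric.sphere (0 : E) 1)ᶜ = 0)
    (hinv : ∀ R : E ≃ₗᵢ[ℝ] E, Measure.map R μ = μ)
    (f : E → E) (hf : ContinuousOn f (Metric.sphere (0 : E) 1))
    (hfs : Set.MapsTo f (Metric.sphere (0 : E) 1) (Metric.sphere (0 : E) 1))
    (hbal : ∫ ζ, f ζ ∂μ = 0)
    (F : E → E → E)
    (hF : ∀ x y, F x y =
      ∫ ζ, (((1 - ‖x‖ ^ 2) / ‖ζ - x‖ ^ 2) ^ n) • Mob (-y) (f ζ) ∂μ) :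
    ∃ D : E →L[ℝ] E, HasFDerivAt (fun x => F x 0) D (0 : E) ∧
      (∀ v : E, D v = ((2 * n : ℝ)) • ∫ ζ, ⟪v, ζ⟫ • f ζ ∂μ) ∧
      ‖D‖ ≤ 2 * n :=
  barycentric_partial_deriv_x_general n E μ hsupp f hf hfs F hF
end
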